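/- Let 𝓑 be a directed family with U ∈ 𝓑 and X ⊆ U constructible. If 𝓢 and 𝓣 are finite sets of balls with Ch(𝓢) = Ch(𝓣) = X and both (𝓢,⊆) and (𝓣,⊆) are ⊴-minimal among all finite sets of balls representing X, then 𝓢 = 𝓣. -/

import Mathlib

variable {U : Type*}

/-- A directed family: nonempty sets, any two nested or disjoint. -/
def DirFam (𝓑 : Set (Set U)) : Prop :=
  (∀ B ∈ 𝓑, B.Nonempty) ∧
    ∀ B₀ ∈ 𝓑, ∀ B₁ ∈ 𝓑, B₀ ⊆ B₁ ∨ B₁ ⊆ B₀ ∨ B₀ ∩ B₁ = ∅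

/-- Constructible sets: finite boolean combinations of balls. -/
inductive Constr (𝓑 : Set (Set U)) : Set U → Prop
  | ball {B : Set U} : B ∈ 𝓑 → Constr 𝓑 B
  | compl {X : Set U} : Constr 𝓑 X → Constr 𝓑 Xᶜ
  | union {X Y : Set U} : Constr 𝓑 X → Constr 𝓑 Y → Constr 𝓑 (X ∪ Y)

/-- Levels of a (finite) subset of a partial order: Lev 0 is the set of maximal
elements, and Lev (n+1) is Lev n of the set with its maximal elements removed. -/
def Lev {α : Type*} [PartialOrder α] : ℕ → Set α → Set α
  | 0, S => {a | a ∈ S ∧ ∀ b ∈ S, a ≤ b → a = b}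
  | n + 1, S => Lev n (S \ {a | a ∈ S ∧ ∀ b ∈ S, a ≤ b → a = b})

/-- The swiss cheese operator: the union, over balls B on even levels of 𝓢, of
B minus the union of its immediate predecessors (the next-level balls inside B). -/
def Ch (𝓢 : Set (Set U)) : Set U :=
  ⋃ n : ℕ, ⋃ B ∈ Lev (2 * n) 𝓢, B \ ⋃₀ {C | C ∈ Lev (2 * n + 1) 𝓢 ∧ C ⊆ B}

/-- A finite forest: the elements above any given element form a chain. -/
def FinForest {α : Type*} [PartialOrder α] (S : Set α) : Prop :=
  ∀ a ∈ S, IsChain (· ≤ ·) {b | b ∈ S ∧ a ≤ b}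

/-- The quasi-order ⊴ on finite forests: first by cardinality, then by top-heaviness
of the level sizes. -/
def ForestQO {α β : Type*} [PartialOrder α] [PartialOrder β] (S : Set α) (T : Set β) :
    Prop :=
  S.ncard < T.ncard ∨
    (S.ncard = T.ncard ∧
      ((∀ n, (Lev n S).ncard = (Lev n T).ncard) ∨
        ∃ n, (∀ i < n, (Lev i S).ncard = (Lev i T).ncard) ∧
          (Lev n T).ncard < (Lev n S).ncard))


/-!
For a finite family `S` of balls, the level of a ball is the number of balls of `S` strictly
containing it, so `x ∈ Ch S` iff `x` lies in an odd number of balls of `S`. Hence the balls of `S`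
inside a ball `E` may be traded for any family of balls inside `E` covering each point of `E` with
the right parity, and minimality of `S` bounds the number of balls it has inside `E`.

If `S ≠ T` are both minimal, let `F` be maximal in `S ∆ T`, say `F ∈ S \ T`; above `F` the two
families agree. Trading inside `F` in both directions shows that `S` and `T` have as many balls
inside `F`, and then, by the lexicographic part of `⊴`, as many on each level. Since `F` is the only
ball of `S` inside `F` on its level, `T` has a single ball `C ⊊ F` on that level, and it contains
every ball of `T` inside `F`. Trading inside `C`, with `C` kept, removed or added according to the
parities, contradicts either the count inside `F` or the parity of the points of `F \ C`.
-/

open Set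

theorem ncard_sdiff_union_add_ncard_inter {α : Type*} {S A I : Set α} (hfS : S.Finite)
    (hfA : A.Finite) (hAI : A ⊆ I) : (S \ I ∪ A).ncard + (S ∩ I).ncard = S.ncard + A.ncard := by
  rw [ncard_union_eq (disjoint_sdiff_left.mono_right hAI) hfS.sdiff hfA,
    ← ncard_inter_add_ncard_sdiff_eq_ncard S I hfS]
  omega

section Forest

variable {α : Type*} [PartialOrder α] {S A : Set α} {a b p : α}

theorem IsChain.exists_isGreatest (hc : IsChain (· ≤ ·) A) (hf : A.Finite) (hne : A.Nonempty) :
    ∃ a, IsGreatest A a := by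
  obtain ⟨a, ha⟩ := hf.exists_maximal hne
  exact ⟨a, ha.prop, fun b hb => (hc.total ha.prop hb).elim (ha.le_of_ge hb) id⟩

theorem IsChain.exists_isLeast (hc : IsChain (· ≤ ·) A) (hf : A.Finite) (hne : A.Nonempty) :
    ∃ a, IsLeast A a := by
  obtain ⟨a, ha⟩ := hf.exists_minimal hne
  exact ⟨a, ha.prop, fun b hb => (hc.total ha.prop hb).elim id (ha.le_of_le hb)⟩

noncomputable def depth (S : Set α) (a : α) : ℕ := (S ∩ Ioi a).ncard

theorem depth_le_depth (hf : S.Finite) (hab : a ≤ b) : depth S b ≤ depth S a :=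
  ncard_le_ncard (inter_subset_inter_right _ (Ioi_subset_Ioi hab)) (hf.inter_of_left _)

theorem depth_lt_depth (hf : S.Finite) (hb : b ∈ S) (hab : a < b) : depth S b < depth S a :=
  ncard_lt_ncard ⟨inter_subset_inter_right _ (Ioi_subset_Ioi hab.le),
    fun h => lt_irrefl b (h ⟨hb, hab⟩).2⟩ (hf.inter_of_left _)

theorem ncard_eq_depth_add_one_of_isLeast (hf : S.Finite) (hAS : A ⊆ S) (hp : IsLeast A p)
    (hup : ∀ b ∈ S, p < b → b ∈ A) : A.ncard = depth S p + 1 := by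
  have hA : A = insert p (S ∩ Ioi p) := by
    ext b
    refine ⟨fun hb => ?_, ?_⟩
    · rcases (hp.2 hb).eq_or_lt with rfl | hpb
      · exact mem_insert _ _
      · exact mem_insert_of_mem _ ⟨hAS hb, hpb⟩
    · rintro (rfl | ⟨hb, hpb⟩)
      exacts [hp.1, hup b hb hpb]
  rw [hA, ncard_insert_of_notMem (fun h : p ∈ S ∩ Ioi p => lt_irrefl p h.2)
    (hf.inter_of_left _), depth]

theorem FinForest.mono {T : Set α} (hS : FinForest S) (hTS : T ⊆ S) : FinForest T :=
  fun a ha => (hS a (hTS ha)).mono fun _ hb => And.intro (hTS hb.1) hb.2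

theorem FinForest.isChain_inter_Ioi (hS : FinForest S) (ha : a ∈ S) :
    IsChain (· ≤ ·) (S ∩ Ioi a) :=
  (hS a ha).mono fun _ hb => And.intro hb.1 (le_of_lt hb.2)

theorem Lev_subset : ∀ (n : ℕ) (S : Set α), Lev n S ⊆ S
  | 0, _ => fun _ ha => ha.1
  | n + 1, _ => (Lev_subset n _).trans sdiff_subset

theorem Lev_zero_eq (hf : S.Finite) : Lev 0 S = {a ∈ S | depth S a = 0} := by
  ext a
  simp only [Lev, depth, mem_ofPred_eq, ncard_eq_zero (hf.inter_of_left _),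
    eq_empty_iff_forall_notMem, mem_inter_iff, mem_Ioi, not_and]
  exact and_congr_right fun _ => forall₂_congr fun b _ =>
    ⟨fun h hab => hab.ne (h hab.le), fun h hab => hab.eq_or_lt.resolve_right (h ·)⟩

/-- Exactly one root lies above a non-root: the greatest element of the chain above it. -/
theorem FinForest.depth_sdiff_Lev_zero_add_one (hS : FinForest S) (hf : S.Finite)
    (ha : a ∈ S \ Lev 0 S) : depth (S \ Lev 0 S) a + 1 = depth S a := by
  have hne : (S ∩ Ioi a).Nonempty := by
    by_contra hemp
    refine ha.2 ⟨ha.1, fun b hb hab => hab.eq_or_lt.resolve_right fun hlt => hemp ⟨b, hb, hlt⟩⟩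
  obtain ⟨t, ht⟩ := (hS.isChain_inter_Ioi ha.1).exists_isGreatest (hf.inter_of_left _) hne
  have htop : t ∈ Lev 0 S :=
    ⟨ht.1.1, fun c hc htc => le_antisymm htc (ht.2 ⟨hc, ht.1.2.trans_le htc⟩)⟩
  have heq : (S \ Lev 0 S) ∩ Ioi a = (S ∩ Ioi a) \ {t} := by
    ext b
    simp only [mem_inter_iff, mem_sdiff, mem_singleton_iff]
    refine ⟨fun ⟨⟨hb, hb0⟩, hab⟩ => ⟨⟨hb, hab⟩, fun hbt => hb0 (hbt ▸ htop)⟩,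
      fun ⟨⟨hb, hab⟩, hbt⟩ => ⟨⟨hb, fun hb0 => hbt ?_⟩, hab⟩⟩
    exact hb0.2 t ht.1.1 (ht.2 ⟨hb, hab⟩)
  rw [depth, heq, ncard_sdiff_singleton_add_one ht.1 (hf.inter_of_left _), depth]

theorem FinForest.Lev_eq (hS : FinForest S) (hf : S.Finite) (n : ℕ) :
    Lev n S = {a ∈ S | depth S a = n} := by
  induction n generalizing S with
  | zero => exact Lev_zero_eq hf
  | succ n ih =>
    change Lev n (S \ Lev 0 S) = _
    rw [ih (hS.mono sdiff_subset) hf.sdiff]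
    ext a
    refine ⟨fun ⟨ha, hn⟩ => ⟨ha.1, ?_⟩, fun ⟨ha, hn⟩ => ?_⟩
    · rw [← hS.depth_sdiff_Lev_zero_add_one hf ha, hn]
    · have ha' : a ∈ S \ Lev 0 S := ⟨ha, fun h0 => by
        rw [Lev_zero_eq hf] at h0
        exact absurd h0.2 (by omega)⟩
      have := hS.depth_sdiff_Lev_zero_add_one hf ha'
      exact ⟨ha', by omega⟩

theorem FinForest.exists_le_depth_eq (hS : FinForest S) (hf : S.Finite) (ha : a ∈ S) {k : ℕ}
    (hk : k ≤ depth S a) : ∃ b ∈ S, a ≤ b ∧ depth S b = k := by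
  obtain ⟨m, hm⟩ := Nat.exists_eq_add_of_le hk
  induction m generalizing a with
  | zero => exact ⟨a, ha, le_rfl, hm⟩
  | succ m ih =>
    have hne : (S ∩ Ioi a).Nonempty := nonempty_of_ncard_ne_zero (by rw [← depth]; omega)
    obtain ⟨p, hp⟩ := (hS.isChain_inter_Ioi ha).exists_isLeast (hf.inter_of_left _) hne
    have hdp : depth S a = depth S p + 1 := ncard_eq_depth_add_one_of_isLeast hf
      inter_subset_left hp fun b hb hpb => ⟨hb, hp.1.2.trans hpb⟩
    obtain ⟨b, hb, hpb, hbk⟩ := ih hp.1.1 (by omega) (by omega)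
    exact ⟨b, hb, hp.1.2.le.trans hpb, hbk⟩

theorem FinForest.Lev_depth_inter_Iic (hS : FinForest S) (hf : S.Finite) (ha : a ∈ S) :
    Lev (depth S a) S ∩ Iic a = {a} := by
  ext b
  rw [hS.Lev_eq hf]
  refine ⟨fun ⟨⟨hb, hba⟩, hle⟩ => hle.eq_or_lt.resolve_right fun hlt => ?_, ?_⟩
  · exact (depth_lt_depth hf ha hlt).ne' hba
  · rintro rfl
    exact ⟨⟨ha, rfl⟩, le_rfl⟩

theorem ForestQO.toLex_le {β : Type*} [PartialOrder β] {R : Set β} {p q : ℕ → ℕ}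
    (hSR : ForestQO S R) (hcard : S.ncard = R.ncard)
    (hlev : ∀ n, (Lev n R).ncard + p n = (Lev n S).ncard + q n) : toLex q ≤ toLex p := by
  rcases hSR with hlt | ⟨-, hall | ⟨n, hbefore, hlt⟩⟩
  · omega
  · exact (congrArg toLex (funext fun n => by have := hlev n; have := hall n; omega)).le
  · refine le_of_lt ⟨n, fun i hi => ?_, ?_⟩
    · have := hlev i; have := hbefore i hi
      change q i = p i
      omega
    · have := hlev n
      change q n < p n
      omega

theorem ForestQO.ncard_le {β : Type*} [PartialOrder β] {R : Set β} (hSR : ForestQO S R) :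
    S.ncard ≤ R.ncard :=
  hSR.elim le_of_lt fun h => h.1.le

theorem sdiff_Iic_union_inter_Ioi (hA : A ⊆ Iic b) (hab : Disjoint (Ioi a) (Iic b)) :
    (S \ Iic b ∪ A) ∩ Ioi a = S ∩ Ioi a := by
  ext c
  constructor
  · rintro ⟨⟨hc, -⟩ | hc, hac⟩
    exacts [⟨hc, hac⟩, (hab.ne_of_mem hac (hA hc) rfl).elim]
  · rintro ⟨hc, hac⟩
    exact ⟨Or.inl ⟨hc, hab.notMem_of_mem_left hac⟩, hac⟩

theorem inter_Ioi_eq_of_maximal_symmDiff {T : Set α} (ha : Maximal (· ∈ symmDiff S T) a) :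
    S ∩ Ioi a = T ∩ Ioi a := by
  ext b
  have := ha.not_prop_of_gt (y := b)
  simp only [mem_inter_iff, mem_Ioi, mem_symmDiff] at this ⊢
  tauto

noncomputable def levelProfile (S : Set α) (a : α) (n : ℕ) : ℕ := (Lev n S ∩ Iic a).ncard

end Forest

section Balls

variable {𝓑 S T G : Set (Set U)} {B C E F : Set U} {x : U}

theorem DirFam.subset_or_subset_of_mem (h : DirFam 𝓑) (hB : B ∈ 𝓑) (hC : C ∈ 𝓑) (hxB : x ∈ B)
    (hxC : x ∈ C) : B ⊆ C ∨ C ⊆ B :=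
  (h.2 B hB C hC).imp_right (·.resolve_right fun hBC => (hBC ▸ mem_inter hxB hxC : x ∈ ∅))

theorem DirFam.ssubset_of_not_subset (h : DirFam 𝓑) (hB : B ∈ 𝓑) (hE : E ∈ 𝓑) (hxB : x ∈ B)
    (hxE : x ∈ E) (hBE : ¬B ⊆ E) : E ⊂ B :=
  ⟨(h.subset_or_subset_of_mem hB hE hxB hxE).resolve_left hBE, hBE⟩

theorem DirFam.isChain_of_forall_mem (h : DirFam 𝓑) (hS : S ⊆ 𝓑) (hx : ∀ B ∈ S, x ∈ B) :
    IsChain (· ≤ ·) S :=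
  fun B hB C hC _ => h.subset_or_subset_of_mem (hS hB) (hS hC) (hx B hB) (hx C hC)

theorem DirFam.finForest (h : DirFam 𝓑) (hS : S ⊆ 𝓑) : FinForest S := fun B hB =>
  let ⟨_, hx⟩ := h.1 B (hS hB)
  h.isChain_of_forall_mem (fun _ hC => hS hC.1) fun _ hC => hC.2 hx

noncomputable def coverCount (S : Set (Set U)) (x : U) : ℕ := {B ∈ S | x ∈ B}.ncard

theorem DirFam.mem_Ch_iff_odd (h : DirFam 𝓑) (hS : S ⊆ 𝓑) (hf : S.Finite) (x : U) :
    x ∈ Ch S ↔ Odd (coverCount S x) := by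
  have hF := h.finForest hS
  simp only [Ch, mem_iUnion, mem_sdiff, mem_sUnion, hF.Lev_eq hf, mem_ofPred_eq, not_exists,
    not_and, exists_prop]
  rcases {B ∈ S | x ∈ B}.eq_empty_or_nonempty with hemp | hne
  · rw [coverCount, hemp, ncard_empty]
    simp only [Nat.not_odd_zero, iff_false, not_exists, not_and]
    exact fun _ B hB hxB _ => hemp.subset ⟨hB.1, hxB⟩
  have hchain : IsChain (· ≤ ·) {B ∈ S | x ∈ B} :=
    h.isChain_of_forall_mem (fun _ hB => hS hB.1) fun _ hB => hB.2
  obtain ⟨B₀, hB₀⟩ := hchain.exists_isLeast (hf.subset (sep_subset _ _)) hne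
  have hcount : coverCount S x = depth S B₀ + 1 := ncard_eq_depth_add_one_of_isLeast hf
    (sep_subset _ _) hB₀ fun B hB hlt => ⟨hB, hlt.le hB₀.1.2⟩
  -- `x ∈ Ch S` says exactly that the smallest ball `B₀` containing `x` is on an even level.
  rw [hcount, Nat.odd_add_one, Nat.not_odd_iff_even]
  constructor
  · rintro ⟨n, B, ⟨hB, hBn⟩, hxB, hhole⟩
    have hle : 2 * n ≤ depth S B₀ := hBn ▸ depth_le_depth hf (hB₀.2 ⟨hB, hxB⟩)
    refine ⟨n, le_antisymm ?_ (by omega)⟩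
    by_contra! hlt
    obtain ⟨C, hC, hB₀C, hCn⟩ := hF.exists_le_depth_eq hf hB₀.1.1 (k := 2 * n + 1) (by omega)
    have hCB : C ⊆ B := Or.resolve_right (h.subset_or_subset_of_mem (hS hC) (hS hB)
      (hB₀C hB₀.1.2) hxB) fun hBC => by have := depth_le_depth hf hBC; omega
    exact hhole C ⟨⟨hC, hCn⟩, hCB⟩ (hB₀C hB₀.1.2)
  · rintro ⟨n, hn⟩
    refine ⟨n, B₀, ⟨hB₀.1.1, by omega⟩, hB₀.1.2, fun C ⟨⟨hC, hCn⟩, _⟩ hxC => ?_⟩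
    have := depth_le_depth hf (hB₀.2 ⟨hC, hxC⟩)
    omega

theorem DirFam.Ch_eq_Ch_iff (h : DirFam 𝓑) (hS : S ⊆ 𝓑) (hfS : S.Finite) (hT : T ⊆ 𝓑)
    (hfT : T.Finite) : Ch S = Ch T ↔ ∀ x, coverCount S x % 2 = coverCount T x % 2 := by
  simp only [Set.ext_iff, h.mem_Ch_iff_odd hS hfS, h.mem_Ch_iff_odd hT hfT, Nat.odd_iff]
  exact forall_congr' fun x => by omega

theorem coverCount_union (hd : Disjoint S T) (hfS : S.Finite) (hfT : T.Finite) (x : U) :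
    coverCount (S ∪ T) x = coverCount S x + coverCount T x :=
  (congrArg ncard (sep_union (p := (x ∈ ·)))).trans <|
    ncard_union_eq (hd.mono (sep_subset _ _) (sep_subset _ _)) (hfS.subset (sep_subset _ _))
      (hfT.subset (sep_subset _ _))

theorem coverCount_eq_sdiff_add_inter (hfS : S.Finite) (E : Set U) (x : U) :
    coverCount S x = coverCount (S \ Iic E) x + coverCount (S ∩ Iic E) x := by
  rw [← coverCount_union disjoint_sdiff_inter hfS.sdiff (hfS.inter_of_left _),
    sdiff_union_inter]

theorem coverCount_eq_zero (hGE : G ⊆ Iic E) (hx : x ∉ E) : coverCount G x = 0 := by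
  rw [coverCount, eq_empty_of_forall_notMem (s := {B ∈ G | x ∈ B})
    fun B hB => hx (hGE hB.1 hB.2), ncard_empty]

theorem coverCount_insert (hfG : G.Finite) (hEG : E ∉ G) (hx : x ∈ E) :
    coverCount (insert E G) x = coverCount G x + 1 := by
  have : {B ∈ insert E G | x ∈ B} = insert E {B ∈ G | x ∈ B} := by
    ext B
    simp only [mem_insert_iff, mem_ofPred_eq]
    constructor
    · rintro ⟨rfl | hB, hxB⟩
      exacts [Or.inl rfl, Or.inr ⟨hB, hxB⟩]
    · rintro (rfl | ⟨hB, hxB⟩)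
      exacts [⟨Or.inl rfl, hx⟩, ⟨Or.inr hB, hxB⟩]
  rw [coverCount, this, ncard_insert_of_notMem (fun h => hEG h.1) (hfG.subset (sep_subset _ _))]
  rfl

theorem DirFam.coverCount_sdiff_Iic (h : DirFam 𝓑) (hS : S ⊆ 𝓑) (hE : E ∈ 𝓑) (hx : x ∈ E) :
    coverCount (S \ Iic E) x = (S ∩ Ioi E).ncard := by
  rw [coverCount]
  congr 1
  ext B
  simp only [mem_ofPred_eq, mem_sdiff, mem_inter_iff, mem_Iic, mem_Ioi]
  exact ⟨fun ⟨⟨hB, hBE⟩, hxB⟩ => ⟨hB, h.ssubset_of_not_subset (hS hB) hE hxB hx hBE⟩,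
    fun ⟨hB, hEB⟩ => ⟨⟨hB, hEB.2⟩, hEB.1 hx⟩⟩

theorem DirFam.coverCount_inter_Iic_mod_two (h : DirFam 𝓑) (hS : S ⊆ 𝓑) (hfS : S.Finite)
    (hT : T ⊆ 𝓑) (hfT : T.Finite) (hST : Ch S = Ch T) (hE : E ∈ 𝓑) (hx : x ∈ E) :
    (coverCount (S ∩ Iic E) x + (S ∩ Ioi E).ncard) % 2 =
      (coverCount (T ∩ Iic E) x + (T ∩ Ioi E).ncard) % 2 := by
  have := (h.Ch_eq_Ch_iff hS hfS hT hfT).1 hST x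
  rw [coverCount_eq_sdiff_add_inter hfS E, coverCount_eq_sdiff_add_inter hfT E,
    h.coverCount_sdiff_Iic hS hE hx, h.coverCount_sdiff_Iic hT hE hx] at this
  omega

theorem DirFam.Ch_sdiff_Iic_union (h : DirFam 𝓑) (hS : S ⊆ 𝓑) (hfS : S.Finite) (hG : G ⊆ 𝓑)
    (hfG : G.Finite) (hGE : G ⊆ Iic E)
    (hpar : ∀ x ∈ E, coverCount G x % 2 = coverCount (S ∩ Iic E) x % 2) :
    Ch (S \ Iic E ∪ G) = Ch S := by
  rw [h.Ch_eq_Ch_iff (union_subset (sdiff_subset.trans hS) hG) (hfS.sdiff.union hfG) hS hfS]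
  intro x
  rw [coverCount_union (disjoint_sdiff_left.mono_right hGE) hfS.sdiff hfG,
    coverCount_eq_sdiff_add_inter hfS E x]
  by_cases hx : x ∈ E
  · have := hpar x hx
    omega
  · rw [coverCount_eq_zero hGE hx, coverCount_eq_zero inter_subset_right hx]

def IsMinimalRep (𝓑 S : Set (Set U)) : Prop :=
  ∀ R ⊆ 𝓑, R.Finite → Ch R = Ch S → ForestQO S R

theorem IsMinimalRep.ncard_inter_Iic_le (hmin : IsMinimalRep 𝓑 S) (h : DirFam 𝓑) (hS : S ⊆ 𝓑)
    (hfS : S.Finite) (hG : G ⊆ 𝓑) (hfG : G.Finite) (hGE : G ⊆ Iic E)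
    (hpar : ∀ x ∈ E, coverCount G x % 2 = coverCount (S ∩ Iic E) x % 2) :
    (S ∩ Iic E).ncard ≤ G.ncard := by
  have hR := hmin _ (union_subset (sdiff_subset.trans hS) hG) (hfS.sdiff.union hfG)
    (h.Ch_sdiff_Iic_union hS hfS hG hfG hGE hpar)
  have := hR.ncard_le
  have := ncard_sdiff_union_add_ncard_inter hfS hfG hGE
  omega

theorem IsMinimalRep.ncard_inter_Iic_le_of_mod_two_eq (hmin : IsMinimalRep 𝓑 S) (h : DirFam 𝓑)
    (hS : S ⊆ 𝓑) (hfS : S.Finite) (hT : T ⊆ 𝓑) (hfT : T.Finite) (hST : Ch S = Ch T) (hE : E ∈ 𝓑)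
    (hpar : (S ∩ Ioi E).ncard % 2 = (T ∩ Ioi E).ncard % 2) :
    (S ∩ Iic E).ncard ≤ (T ∩ Iic E).ncard :=
  hmin.ncard_inter_Iic_le h hS hfS (inter_subset_left.trans hT) (hfT.inter_of_left _)
    inter_subset_right fun x hx => by
      have := h.coverCount_inter_Iic_mod_two hS hfS hT hfT hST hE hx
      omega

theorem IsMinimalRep.ncard_inter_Iic_add_one_le (hmin : IsMinimalRep 𝓑 S) (h : DirFam 𝓑)
    (hS : S ⊆ 𝓑) (hfS : S.Finite) (hT : T ⊆ 𝓑) (hfT : T.Finite) (hST : Ch S = Ch T) (hET : E ∈ T)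
    (hpar : (S ∩ Ioi E).ncard % 2 ≠ (T ∩ Ioi E).ncard % 2) :
    (S ∩ Iic E).ncard + 1 ≤ (T ∩ Iic E).ncard := by
  have hfTE : (T ∩ Iic E).Finite := hfT.inter_of_left _
  have hE : E ∈ T ∩ Iic E := ⟨hET, self_mem_Iic⟩
  have hG : (T ∩ Iic E) \ {E} ⊆ 𝓑 := sdiff_subset.trans (inter_subset_left.trans hT)
  have hle := hmin.ncard_inter_Iic_le h hS hfS hG hfTE.sdiff
    (sdiff_subset.trans inter_subset_right) fun x hx => by
      have := h.coverCount_inter_Iic_mod_two hS hfS hT hfT hST (hT hET) hx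
      rw [← insert_eq_of_mem hE, ← insert_sdiff_singleton,
        coverCount_insert hfTE.sdiff (fun h => h.2 (mem_singleton E)) hx] at this
      omega
  have := ncard_sdiff_singleton_add_one hE hfTE
  omega

theorem IsMinimalRep.ncard_inter_Iic_le_add_one (hmin : IsMinimalRep 𝓑 S) (h : DirFam 𝓑)
    (hS : S ⊆ 𝓑) (hfS : S.Finite) (hT : T ⊆ 𝓑) (hfT : T.Finite) (hST : Ch S = Ch T) (hE : E ∈ 𝓑)
    (hET : E ∉ T) (hpar : (S ∩ Ioi E).ncard % 2 ≠ (T ∩ Ioi E).ncard % 2) :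
    (S ∩ Iic E).ncard ≤ (T ∩ Iic E).ncard + 1 := by
  have hfTE : (T ∩ Iic E).Finite := hfT.inter_of_left _
  have hEG : E ∉ T ∩ Iic E := fun h => hET h.1
  have hle := hmin.ncard_inter_Iic_le h hS hfS (insert_subset hE (inter_subset_left.trans hT))
    (hfTE.insert E) (insert_subset self_mem_Iic inter_subset_right) fun x hx => by
      have := h.coverCount_inter_Iic_mod_two hS hfS hT hfT hST hE hx
      rw [coverCount_insert hfTE hEG hx]
      omega
  rwa [ncard_insert_of_notMem hEG hfTE] at hle

theorem DirFam.inter_Ioi_eq_union (h : DirFam 𝓑) (hS : S ⊆ 𝓑) (hC : C ∈ 𝓑) (hF : F ∈ 𝓑)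
    (hCF : C ⊆ F) : S ∩ Ioi C = S ∩ Ioi F ∪ S ∩ Iic F ∩ Ioi C := by
  ext D
  constructor
  · rintro ⟨hD, hCD⟩
    by_cases hDF : D ⊆ F
    · exact Or.inr ⟨⟨hD, hDF⟩, hCD⟩
    · obtain ⟨x, hx⟩ := h.1 C hC
      exact Or.inl ⟨hD, h.ssubset_of_not_subset (hS hD) hF (hCD.1 hx) (hCF hx) hDF⟩
  · rintro (⟨hD, hFD⟩ | ⟨⟨hD, -⟩, hCD⟩)
    exacts [⟨hD, hCF.trans_ssubset hFD⟩, ⟨hD, hCD⟩]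

theorem DirFam.Lev_sdiff_Iic_union (h : DirFam 𝓑) (hS : S ⊆ 𝓑) (hfS : S.Finite) (hT : T ⊆ 𝓑)
    (hfT : T.Finite) (hF : F ∈ 𝓑) (hSTF : S ∩ Ioi F = T ∩ Ioi F) (n : ℕ) :
    Lev n (S \ Iic F ∪ T ∩ Iic F) = Lev n S \ Iic F ∪ Lev n T ∩ Iic F := by
  set R := S \ Iic F ∪ T ∩ Iic F
  have hR : R ⊆ 𝓑 := union_subset (sdiff_subset.trans hS) (inter_subset_left.trans hT)
  have hRF : R ∩ Iic F = T ∩ Iic F := by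
    ext D
    simp only [R, mem_inter_iff, mem_union, mem_sdiff]
    tauto
  have hdepth_out : ∀ B, ¬B ⊆ F → depth R B = depth S B := fun B hBF =>
    congrArg ncard <| sdiff_Iic_union_inter_Ioi inter_subset_right <|
      disjoint_left.2 fun D hBD hDF => hBF (hBD.le.trans hDF)
  have hdepth_in : ∀ C ∈ 𝓑, C ⊆ F → depth R C = depth T C := fun C hC hCF => by
    rw [depth, depth, h.inter_Ioi_eq_union hR hC hF hCF, h.inter_Ioi_eq_union hT hC hF hCF, hRF,
      sdiff_Iic_union_inter_Ioi inter_subset_right (Iic_disjoint_Ioi le_rfl).symm, hSTF]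
  rw [(h.finForest hR).Lev_eq (hfS.sdiff.union (hfT.inter_of_left _)),
    (h.finForest hS).Lev_eq hfS, (h.finForest hT).Lev_eq hfT]
  ext B
  by_cases hBF : B ⊆ F
  · have hBR : B ∈ R ↔ B ∈ T := by simp [R, hBF]
    simp only [mem_ofPred_eq, mem_union, mem_sdiff, mem_inter_iff, mem_Iic, hBR,
      hBF, not_true_eq_false, and_false, false_or, and_true]
    exact and_congr_right fun hB => by rw [hdepth_in B (hT hB) hBF]
  · have hBR : B ∈ R ↔ B ∈ S := by simp [R, hBF]
    simp only [mem_ofPred_eq, mem_union, mem_sdiff, mem_inter_iff, mem_Iic, hBR,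
      hBF, not_false_eq_true, and_true, and_false, or_false, hdepth_out B hBF]

theorem IsMinimalRep.toLex_levelProfile_le (hmin : IsMinimalRep 𝓑 S) (h : DirFam 𝓑)
    (hS : S ⊆ 𝓑) (hfS : S.Finite) (hT : T ⊆ 𝓑) (hfT : T.Finite) (hST : Ch S = Ch T) (hF : F ∈ 𝓑)
    (hSTF : S ∩ Ioi F = T ∩ Ioi F) (hcard : (S ∩ Iic F).ncard = (T ∩ Iic F).ncard) :
    toLex (levelProfile T F) ≤ toLex (levelProfile S F) := by
  have hTF : T ∩ Iic F ⊆ 𝓑 := inter_subset_left.trans hT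
  have hfTF : (T ∩ Iic F).Finite := hfT.inter_of_left _
  have hR := h.Ch_sdiff_Iic_union hS hfS hTF hfTF inter_subset_right fun x hx => by
    have := h.coverCount_inter_Iic_mod_two hS hfS hT hfT hST hF hx
    rw [hSTF] at this
    omega
  refine (hmin _ (union_subset (sdiff_subset.trans hS) hTF) (hfS.sdiff.union hfTF) hR).toLex_le
    ?_ fun n => ?_
  · have := ncard_sdiff_union_add_ncard_inter hfS hfTF inter_subset_right
    omega
  · rw [h.Lev_sdiff_Iic_union hS hfS hT hfT hF hSTF n, levelProfile, levelProfile]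
    exact ncard_sdiff_union_add_ncard_inter (hfS.subset (Lev_subset n S))
      ((hfT.subset (Lev_subset n T)).inter_of_left _) inter_subset_right

/-- Climbing from a ball of `T` inside `F` up to the depth of `F` cannot leave `F`. -/
theorem DirFam.inter_Iic_subset_Iic (h : DirFam 𝓑) (hT : T ⊆ 𝓑) (hfT : T.Finite) (hF : F ∈ 𝓑)
    (hC : Lev (depth T F) T ∩ Iic F = {C}) : T ∩ Iic F ⊆ Iic C := by
  rintro D ⟨hDT, hDF⟩
  have hforest := h.finForest hT
  obtain ⟨M, hMT, hDM, hMd⟩ := hforest.exists_le_depth_eq hfT hDT (depth_le_depth hfT hDF)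
  have hMF : M ⊆ F := by
    by_contra hMF
    obtain ⟨x, hx⟩ := h.1 D (hT hDT)
    have := depth_lt_depth hfT hMT (h.ssubset_of_not_subset (hT hMT) hF (hDM hx) (hDF hx) hMF)
    omega
  have hM : M ∈ Lev (depth T F) T ∩ Iic F :=
    ⟨by rw [hforest.Lev_eq hfT]; exact ⟨hMT, hMd⟩, hMF⟩
  rw [hC, mem_singleton_iff] at hM
  exact hM ▸ hDM

theorem IsMinimalRep.false_of_inter_Iic_subset (hmin : IsMinimalRep 𝓑 S) (h : DirFam 𝓑)
    (hS : S ⊆ 𝓑) (hfS : S.Finite) (hT : T ⊆ 𝓑) (hfT : T.Finite) (hST : Ch S = Ch T)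
    (hFT : F ∈ T) (hC : C ∈ 𝓑) (hCF : C ⊂ F) (hSC : S ∩ Iic F ⊆ Iic C)
    (hpar : (S ∩ Ioi F).ncard % 2 = (T ∩ Ioi F).ncard % 2)
    (hcard : (T ∩ Iic F).ncard ≤ (S ∩ Iic F).ncard) : False := by
  have hfTF : (T ∩ Iic F).Finite := hfT.inter_of_left _
  have hSCF : S ∩ Iic C = S ∩ Iic F :=
    (inter_subset_inter_right _ (Iic_subset_Iic.2 hCF.1)).antisymm fun D hD => ⟨hD.1, hSC hD⟩
  have hTC : T ∩ Iic C ⊆ (T ∩ Iic F) \ {F} := fun D ⟨hD, hDC⟩ =>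
    ⟨⟨hD, hDC.trans hCF.1⟩, fun hDF => hCF.2 ((mem_singleton_iff.1 hDF) ▸ hDC)⟩
  have hFTF : F ∈ T ∩ Iic F := ⟨hFT, self_mem_Iic⟩
  have hTF := ncard_sdiff_singleton_add_one hFTF hfTF
  have hTC_le := ncard_le_ncard hTC hfTF.sdiff
  by_cases hparC : (S ∩ Ioi C).ncard % 2 = (T ∩ Ioi C).ncard % 2
  · have := hmin.ncard_inter_Iic_le_of_mod_two_eq h hS hfS hT hfT hST hC hparC
    rw [hSCF] at this
    omega
  by_cases hCT : C ∈ T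
  · have := hmin.ncard_inter_Iic_add_one_le h hS hfS hT hfT hST hCT hparC
    rw [hSCF] at this
    omega
  -- Now `T ∩ Iic C` is all of `T ∩ Iic F` but `F`: inside `F`, the points of `F \ C` lie in
  -- one ball of `T` and in none of `S`.
  have := hmin.ncard_inter_Iic_le_add_one h hS hfS hT hfT hST hC hCT hparC
  rw [hSCF] at this
  have hTCF : insert F (T ∩ Iic C) = T ∩ Iic F := by
    rw [eq_of_subset_of_ncard_le hTC (by omega) hfTF.sdiff, insert_sdiff_singleton,
      insert_eq_of_mem hFTF]
  obtain ⟨x, hxF, hxC⟩ := exists_of_ssubset hCF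
  have hx := h.coverCount_inter_Iic_mod_two hS hfS hT hfT hST (hT hFT) hxF
  rw [coverCount_eq_zero hSC hxC, ← hTCF,
    coverCount_insert (hfT.inter_of_left _) (fun hF => hCF.2 hF.2) hxF,
    coverCount_eq_zero inter_subset_right hxC] at hx
  omega

theorem DirFam.false_of_mem_sdiff (h : DirFam 𝓑) (hS : S ⊆ 𝓑) (hfS : S.Finite) (hT : T ⊆ 𝓑)
    (hfT : T.Finite) (hST : Ch S = Ch T) (hminS : IsMinimalRep 𝓑 S) (hminT : IsMinimalRep 𝓑 T)
    (hFS : F ∈ S) (hFT : F ∉ T) (hSTF : S ∩ Ioi F = T ∩ Ioi F) : False := by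
  have hF := hS hFS
  have hpar : (S ∩ Ioi F).ncard % 2 = (T ∩ Ioi F).ncard % 2 := by rw [hSTF]
  have hcard : (S ∩ Iic F).ncard = (T ∩ Iic F).ncard :=
    (hminS.ncard_inter_Iic_le_of_mod_two_eq h hS hfS hT hfT hST hF hpar).antisymm
      (hminT.ncard_inter_Iic_le_of_mod_two_eq h hT hfT hS hfS hST.symm hF hpar.symm)
  have hprofile : levelProfile T F = levelProfile S F := toLex.injective <|
    (hminS.toLex_levelProfile_le h hS hfS hT hfT hST hF hSTF hcard).antisymm
      (hminT.toLex_levelProfile_le h hT hfT hS hfS hST.symm hF hSTF.symm hcard.symm)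
  obtain ⟨C, hC⟩ : ∃ C, Lev (depth T F) T ∩ Iic F = {C} := by
    rw [← ncard_eq_one, depth, ← hSTF]
    change levelProfile T F (depth S F) = 1
    rw [hprofile, levelProfile, (h.finForest hS).Lev_depth_inter_Iic hfS hFS, ncard_singleton]
  have hCT : C ∈ T ∩ Iic F := hC.superset (mem_singleton C) |>.imp_left (Lev_subset _ _ ·)
  exact hminT.false_of_inter_Iic_subset h hT hfT hS hfS hST.symm hFS (hT hCT.1)
    ⟨hCT.2, fun hFC => hFT (hCT.2.antisymm hFC ▸ hCT.1)⟩ (h.inter_Iic_subset_Iic hT hfT hF hC)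
    hpar.symm hcard.le

end Balls

theorem stmt14_general (𝓑 : Set (Set U)) (h : DirFam 𝓑)
    (X : Set U) (𝓢 𝓣 : Set (Set U))
    (h𝓢 : 𝓢 ⊆ 𝓑) (h𝓣 : 𝓣 ⊆ 𝓑) (hfS : 𝓢.Finite) (hfT : 𝓣.Finite)
    (hS : Ch 𝓢 = X) (hT : Ch 𝓣 = X)
    (hminS : ∀ 𝓡 : Set (Set U), 𝓡 ⊆ 𝓑 → 𝓡.Finite → Ch 𝓡 = X → ForestQO 𝓢 𝓡)
    (hminT : ∀ 𝓡 : Set (Set U), 𝓡 ⊆ 𝓑 → 𝓡.Finite → Ch 𝓡 = X → ForestQO 𝓣 𝓡) :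
    𝓢 = 𝓣 := by
  have hminS' : IsMinimalRep 𝓑 𝓢 := fun R hR hfR hRS => hminS R hR hfR (hRS.trans hS)
  have hminT' : IsMinimalRep 𝓑 𝓣 := fun R hR hfR hRT => hminT R hR hfR (hRT.trans hT)
  have hST : Ch 𝓢 = Ch 𝓣 := hS.trans hT.symm
  by_contra hne
  obtain ⟨F, hF⟩ := ((hfS.union hfT).subset symmDiff_subset_union).exists_maximal
    (symmDiff_nonempty.2 hne)
  have hSTF := inter_Ioi_eq_of_maximal_symmDiff hF
  rcases hF.prop with ⟨hFS, hFT⟩ | ⟨hFT, hFS⟩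
  · exact h.false_of_mem_sdiff h𝓢 hfS h𝓣 hfT hST hminS' hminT' hFS hFT hSTF
  · exact h.false_of_mem_sdiff h𝓣 hfT h𝓢 hfS hST.symm hminT' hminS' hFT hFS hSTF.symm

/-- ⊴-minimal representatives of a constructible set coincide. -/
theorem stmt14 (𝓑 : Set (Set U)) (h : DirFam 𝓑) (hU : (Set.univ : Set U) ∈ 𝓑)
    (X : Set U) (hX : Constr 𝓑 X) (𝓢 𝓣 : Set (Set U))
    (h𝓢 : 𝓢 ⊆ 𝓑) (h𝓣 : 𝓣 ⊆ 𝓑) (hfS : 𝓢.Finite) (hfT : 𝓣.Finite)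
    (hS : Ch 𝓢 = X) (hT : Ch 𝓣 = X)
    (hminS : ∀ 𝓡 : Set (Set U), 𝓡 ⊆ 𝓑 → 𝓡.Finite → Ch 𝓡 = X → ForestQO 𝓢 𝓡)
    (hminT : ∀ 𝓡 : Set (Set U), 𝓡 ⊆ 𝓑 → 𝓡.Finite → Ch 𝓡 = X → ForestQO 𝓣 𝓡) :
    𝓢 = 𝓣 :=
  stmt14_general 𝓑 h X 𝓢 𝓣 h𝓢 h𝓣 hfS hfT hS hT hminS hminT
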